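/- Let n ≥ 5 and let P = (Y, X, Z) be a path of length two in the augmented cube AQ_n (i.e., Y, X, Z are three distinct vertices with Y adjacent to X and X adjacent to Z). Then at most one vertex of AQ_n is simultaneously adjacent to all three of X, Y, and Z. -/

import Mathlib

/-- Flip the single bit at index `i` (paper bit `i+1`), i.e. the map `X ↦ X_{i+1}`. -/
def flipBit {n : ℕ} (i : Fin n) (X : Fin n → Bool) : Fin n → Bool :=
  fun j => if j = i then !(X j) else X j

/-- Flip all bits at indices `≤ i` (paper bits `i+1, i, …, 1`), i.e. the map `X ↦ X̄_{i+1}`. -/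
def flipDown {n : ℕ} (i : Fin n) (X : Fin n → Bool) : Fin n → Bool :=
  fun j => if j ≤ i then !(X j) else X j

lemma flipBit_flipBit {n : ℕ} (i : Fin n) (X : Fin n → Bool) :
    flipBit i (flipBit i X) = X := by
  funext j; by_cases h : j = i <;> simp [flipBit, h]

lemma flipDown_flipDown {n : ℕ} (i : Fin n) (X : Fin n → Bool) :
    flipDown i (flipDown i X) = X := by
  funext j; by_cases h : j ≤ i <;> simp [flipDown, h]

/-- The augmented cube `AQ_n`: vertices are `n`-bit strings; two distinct vertices `X, Y`
are adjacent iff `Y = X_i` for some `1 ≤ i ≤ n` (a hypercube edge) or `Y = X̄_i` for some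
`2 ≤ i ≤ n` (a complement edge).  Paper bit `i` corresponds to index `i - 1 : Fin n`. -/
def augCube (n : ℕ) : SimpleGraph (Fin n → Bool) where
  Adj X Y := X ≠ Y ∧
    ((∃ i : Fin n, Y = flipBit i X) ∨ (∃ i : Fin n, 1 ≤ i.val ∧ Y = flipDown i X))
  symm := ⟨by
    rintro X Y ⟨hne, h⟩
    refine ⟨hne.symm, ?_⟩
    rcases h with ⟨i, rfl⟩ | ⟨i, hi, rfl⟩
    · exact Or.inl ⟨i, (flipBit_flipBit i X).symm⟩
    · exact Or.inr ⟨i, hi, (flipDown_flipDown i X).symm⟩⟩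
  loopless := ⟨fun X h => h.1 rfl⟩

/-! With `+` the bitwise xor, `AQ_n` is the Cayley graph of `(ℤ/2)ⁿ` whose generators are the
unit vectors `e_i` and the initial segments `d_i = e_0 + ⋯ + e_i`. List them as
`g_0 = e_0 = d_0`, `g_{2i-1} = e_i`, `g_{2i} = d_i`. A sum of two distinct generators
`g_c + g_{c'}` is again a generator only for `|c - c'| = 1`, or for `|c - c'| = 2` with `c, c'`
even; in the graph on codes defined by these pairs two distinct vertices have at most one common
neighbour. If `Y = X + g_p`, `Z = X + g_q` and `W = X + g_a` is adjacent to `Y` and `Z`, then `a`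
is such a common neighbour of `p ≠ q`, so `W` is unique. -/

def augCubeGen (n c : ℕ) (j : Fin n) : Bool :=
  decide (c % 2 = 0 ∧ 2 * j.val ≤ c ∨ c % 2 = 1 ∧ 2 * j.val = c + 1)

theorem augCubeGen_eq_true {n c : ℕ} {j : Fin n} :
    augCubeGen n c j = true ↔ c % 2 = 0 ∧ 2 * j.val ≤ c ∨ c % 2 = 1 ∧ 2 * j.val = c + 1 :=
  decide_eq_true_iff

-- For `i = 0` the truncated code `2 * 0 - 1 = 0` is that of `d_0 = e_0`.
theorem flipBit_eq_add {n : ℕ} (i : Fin n) (X : Fin n → Bool) :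
    flipBit i X = X + augCubeGen n (2 * i - 1) := by
  funext j
  have hgen : augCubeGen n (2 * i - 1) j = decide (j = i) := by
    rw [Bool.eq_iff_iff, augCubeGen_eq_true, decide_eq_true_iff, Fin.ext_iff]; omega
  rw [Pi.add_apply, Bool.add_eq_xor, hgen, flipBit]
  by_cases h : j = i <;> simp [h]

theorem flipDown_eq_add {n : ℕ} (i : Fin n) (X : Fin n → Bool) :
    flipDown i X = X + augCubeGen n (2 * i) := by
  funext j
  have hgen : augCubeGen n (2 * i) j = decide (j ≤ i) := by
    rw [Bool.eq_iff_iff, augCubeGen_eq_true, decide_eq_true_iff, Fin.le_def]; omega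
  rw [Pi.add_apply, Bool.add_eq_xor, hgen, flipDown]
  by_cases h : j ≤ i <;> simp [h]

theorem augCubeGen_ne_zero {n c : ℕ} (hc : c < 2 * n - 1) : augCubeGen n c ≠ 0 := by
  intro h
  have htop : augCubeGen n c ⟨(c + 1) / 2, by omega⟩ = true :=
    augCubeGen_eq_true.2 (by dsimp only; omega)
  simp [h] at htop

theorem augCube_adj_iff {n : ℕ} {X Y : Fin n → Bool} :
    (augCube n).Adj X Y ↔ ∃ c < 2 * n - 1, Y = X + augCubeGen n c := by
  constructor
  · rintro ⟨-, ⟨i, rfl⟩ | ⟨i, -, rfl⟩⟩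
    · exact ⟨2 * i - 1, by omega, flipBit_eq_add i X⟩
    · exact ⟨2 * i, by omega, flipDown_eq_add i X⟩
  · rintro ⟨c, hc, rfl⟩
    refine ⟨left_ne_add.2 (augCubeGen_ne_zero hc), ?_⟩
    by_cases hc' : c % 2 = 1 ∨ c = 0
    · refine Or.inl ⟨⟨(c + 1) / 2, by omega⟩, ?_⟩
      rw [flipBit_eq_add]
      congr 2
      show c = 2 * ((c + 1) / 2) - 1
      omega
    · refine Or.inr ⟨⟨c / 2, by omega⟩, by show 1 ≤ c / 2; omega, ?_⟩
      rw [flipDown_eq_add]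
      congr 2
      show c = 2 * (c / 2)
      omega

def augCodeGraph : SimpleGraph ℕ :=
  SimpleGraph.fromRel fun c c' => c' = c + 1 ∨ c % 2 = 0 ∧ c' = c + 2

theorem augCodeGraph_adj_of_add_eq_of_lt {n c c' c'' : ℕ} (hc' : c' < 2 * n - 1)
    (hlt : c < c') (h : augCubeGen n c + augCubeGen n c' = augCubeGen n c'') :
    augCodeGraph.Adj c c' := by
  have bit (m : ℕ) (hm : m < n) : (augCubeGen n c'' ⟨m, hm⟩ = true ↔
      ¬(augCubeGen n c ⟨m, hm⟩ = true ↔ augCubeGen n c' ⟨m, hm⟩ = true)) := by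
    rw [← h, Pi.add_apply, Bool.add_eq_xor]
    cases augCubeGen n c ⟨m, hm⟩ <;> cases augCubeGen n c' ⟨m, hm⟩ <;> decide
  simp only [augCubeGen_eq_true] at bit
  -- `g_c` is `{(c + 1) / 2}` for odd `c` and `[0, c / 2]` for even `c`; these probes suffice.
  have h₀ := bit 0
  have h₁ := bit (c / 2 + 1)
  have h₂ := bit (c / 2 + 2)
  have h₃ := bit (c' / 2)
  have h₄ := bit (c' / 2 + 1)
  rw [augCodeGraph, SimpleGraph.fromRel_adj]
  rcases Nat.mod_two_eq_zero_or_one c with pc | pc <;>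
    rcases Nat.mod_two_eq_zero_or_one c' with pc' | pc' <;>
    rcases Nat.mod_two_eq_zero_or_one c'' with pc'' | pc'' <;>
    simp only [pc, pc', pc'', true_and, zero_ne_one, one_ne_zero, false_and, or_false,
      false_or] at h₀ h₁ h₂ h₃ h₄ ⊢ <;>
    omega

theorem augCodeGraph_adj_of_add_eq {n c c' c'' : ℕ} (hc : c < 2 * n - 1)
    (hc' : c' < 2 * n - 1) (hne : c ≠ c')
    (h : augCubeGen n c + augCubeGen n c' = augCubeGen n c'') : augCodeGraph.Adj c c' := by
  rcases hne.lt_or_gt with hlt | hlt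
  · exact augCodeGraph_adj_of_add_eq_of_lt hc' hlt h
  · exact (augCodeGraph_adj_of_add_eq_of_lt hc hlt ((add_comm _ _).trans h)).symm

theorem augCodeGraph_adj_of_augCube_adj {n a p : ℕ} {X : Fin n → Bool} (ha : a < 2 * n - 1)
    (hp : p < 2 * n - 1) (hadj : (augCube n).Adj (X + augCubeGen n a) (X + augCubeGen n p)) :
    augCodeGraph.Adj a p := by
  obtain ⟨b, -, hb⟩ := augCube_adj_iff.1 hadj
  have hap : a ≠ p := by rintro rfl; exact hadj.ne rfl
  refine augCodeGraph_adj_of_add_eq (c'' := b) ha hp hap ?_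
  rw [add_assoc, add_right_inj] at hb
  have hself : augCubeGen n a + augCubeGen n a = 0 := funext fun j => BooleanRing.add_self _
  rw [hb, ← add_assoc, hself, zero_add]

theorem augCodeGraph_common_neighbors_subsingleton {p q : ℕ} (hpq : p ≠ q) :
    (augCodeGraph.neighborSet p ∩ augCodeGraph.neighborSet q).Subsingleton := by
  rintro a ⟨hpa, hqa⟩ a' ⟨hpa', hqa'⟩
  simp only [SimpleGraph.mem_neighborSet, augCodeGraph, SimpleGraph.fromRel_adj] at *
  omega

theorem exists_augCodeGraph_common_neighbor {n p q : ℕ} {X W : Fin n → Bool}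
    (hp : p < 2 * n - 1) (hq : q < 2 * n - 1) (hWX : (augCube n).Adj W X)
    (hWY : (augCube n).Adj W (X + augCubeGen n p)) (hWZ : (augCube n).Adj W (X + augCubeGen n q)) :
    ∃ a ∈ augCodeGraph.neighborSet p ∩ augCodeGraph.neighborSet q,
      W = X + augCubeGen n a := by
  obtain ⟨a, ha, rfl⟩ := augCube_adj_iff.1 hWX.symm
  exact ⟨a, ⟨(augCodeGraph_adj_of_augCube_adj ha hp hWY).symm,
    (augCodeGraph_adj_of_augCube_adj ha hq hWZ).symm⟩, rfl⟩

theorem augCube_path_common_neighbor_le_one_general (n : ℕ) (X Y Z : Fin n → Bool)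
    (hYZ : Y ≠ Z) (hYX : (augCube n).Adj Y X) (hXZ : (augCube n).Adj X Z) :
    {W | (augCube n).Adj W X ∧ (augCube n).Adj W Y ∧ (augCube n).Adj W Z}.ncard ≤ 1 := by
  obtain ⟨p, hp, rfl⟩ := augCube_adj_iff.1 hYX.symm
  obtain ⟨q, hq, rfl⟩ := augCube_adj_iff.1 hXZ
  have hpq : p ≠ q := by rintro rfl; exact hYZ rfl
  refine (Set.ncard_le_one_iff (Set.toFinite _)).2
    fun ⟨hWX, hWY, hWZ⟩ ⟨hW'X, hW'Y, hW'Z⟩ => ?_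
  obtain ⟨a, ha, rfl⟩ := exists_augCodeGraph_common_neighbor hp hq hWX hWY hWZ
  obtain ⟨a', ha', rfl⟩ := exists_augCodeGraph_common_neighbor hp hq hW'X hW'Y hW'Z
  rw [augCodeGraph_common_neighbors_subsingleton hpq ha ha']

/-- Let `n ≥ 5` and let `P = (Y, X, Z)` be a path of length two in `AQ_n`.  Then at most
one vertex of `AQ_n` is simultaneously adjacent to all three of `X`, `Y` and `Z`. -/
theorem augCube_path_common_neighbor_le_one (n : ℕ) (hn : 5 ≤ n) (X Y Z : Fin n → Bool)
    (hYZ : Y ≠ Z) (hYX : (augCube n).Adj Y X) (hXZ : (augCube n).Adj X Z) :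
    {W | (augCube n).Adj W X ∧ (augCube n).Adj W Y ∧ (augCube n).Adj W Z}.ncard ≤ 1 :=
  augCube_path_common_neighbor_le_one_general n X Y Z hYZ hYX hXZ
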